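/- For every natural number n ≥ 1, ∑_{k=1}^∞ (1/(2k+1)^{n+1}) · C(2k,k)/4^k = ((−1)^n / n!) · ∫_0^{π/2} (ln sin x)^n dx − 1. -/

import Mathlib

open scoped BigOperators
open Real

noncomputable def cb (k : ℕ) : ℝ := (Nat.choose (2*k) k : ℝ) / 4^k

noncomputable def H (k : ℕ) : ℝ := ∑ j ∈ Finset.range k, (1:ℝ)/(j+1)

noncomputable def oh (k : ℕ) : ℝ := ∑ j ∈ Finset.range k, (1:ℝ)/(2*j+1)

/-!
Substituting `t = sin x` turns the integral into `∫₀¹ (log t)ⁿ / √(1 - t²) dt`. Expand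
`1 / √(1 - y) = ∑ cb k * yᵏ`: its Cauchy square is the geometric series because
`∑_{i+j=N} cb i * cb j = 1`, which follows from `(2k+2) cb (k+1) = (2k+1) cb k` and the symmetry
`i ↔ j`. Integrating term by term with `∫₀¹ t^m (-log t)ⁿ dt = n! / (m+1)^(n+1)` (a Gamma integral
after `t = e^{-u}`) gives `(-1)ⁿ n! ∑ₖ cb k / (2k+1)^(n+1)`, whose `k = 0` term is `1`.
Since `cb k / (2k+2) = cb k - cb (k+1)` telescopes, the series converges for every `n`.
-/

open MeasureTheory Set Finset.HasAntidiagonal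
open scoped Nat

lemma cb_zero : cb 0 = 1 := by simp [cb]

lemma cb_pos (k : ℕ) : 0 < cb k := by
  unfold cb
  have := Nat.choose_pos (Nat.le_mul_of_pos_left k two_pos)
  positivity

lemma cb_succ (k : ℕ) : (2 * k + 2) * cb (k + 1) = (2 * k + 1) * cb k := by
  have h : ((k : ℝ) + 1) * (2 * (k + 1)).choose (k + 1) = 2 * (2 * k + 1) * (2 * k).choose k := by
    exact_mod_cast Nat.succ_mul_centralBinom_succ k
  simp only [cb, pow_succ]
  field_simp
  linear_combination 2 * h

lemma cb_sub_cb_succ (k : ℕ) : cb k - cb (k + 1) = cb k / (2 * k + 2) := by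
  field_simp
  linear_combination -cb_succ k

lemma cb_antitone : Antitone cb :=
  antitone_nat_of_succ_le fun k => by
    have := cb_pos k
    have : 0 ≤ cb k / (2 * k + 2) := by positivity
    linarith [cb_sub_cb_succ k]

lemma cb_le_one (k : ℕ) : cb k ≤ 1 := cb_zero ▸ cb_antitone k.zero_le

lemma summable_cb_div : Summable fun k : ℕ => cb k / (2 * k + 2) := by
  refine summable_of_sum_range_le (c := 1) (fun k => ?_) fun N => ?_
  · have := cb_pos k
    positivity
  · simp_rw [← cb_sub_cb_succ]
    rw [Finset.sum_range_sub', cb_zero]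
    linarith [cb_pos N]

lemma summable_cb_div_pow (n : ℕ) : Summable fun k : ℕ => cb k / (2 * k + 1) ^ (n + 1) := by
  refine (summable_cb_div.mul_left 2).of_nonneg_of_le (fun k => ?_) fun k => ?_
  · have := cb_pos k
    positivity
  · have hk : (1 : ℝ) ≤ 2 * k + 1 := by linarith [k.cast_nonneg (α := ℝ)]
    calc cb k / (2 * k + 1) ^ (n + 1) ≤ cb k / (2 * k + 1) := by
          gcongr
          · exact (cb_pos k).le
          · exact le_self_pow₀ hk n.succ_ne_zero
      _ ≤ 2 * (cb k / (2 * k + 2)) := by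
          rw [mul_div_assoc', div_le_div_iff₀ (by positivity) (by positivity)]
          nlinarith [cb_pos k]

lemma two_mul_sum_antidiagonal_fst_mul {R : Type*} [CommSemiring R] (a : ℕ → R) (N : ℕ) :
    2 * ∑ p ∈ antidiagonal N, (p.1 : R) * (a p.1 * a p.2)
      = N * ∑ p ∈ antidiagonal N, a p.1 * a p.2 := by
  have hswap : ∑ p ∈ antidiagonal N, (p.1 : R) * (a p.1 * a p.2)
      = ∑ p ∈ antidiagonal N, (p.2 : R) * (a p.1 * a p.2) := by
    rw [← Finset.Nat.sum_antidiagonal_swap (f := fun p : ℕ × ℕ => (p.2 : R) * (a p.1 * a p.2))]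
    exact Finset.sum_congr rfl fun p _ => by simp only [Prod.fst_swap, Prod.snd_swap]; ring
  rw [two_mul]
  nth_rewrite 2 [hswap]
  rw [← Finset.sum_add_distrib, Finset.mul_sum]
  refine Finset.sum_congr rfl fun p hp => ?_
  rw [← add_mul, ← Nat.cast_add, mem_antidiagonal.mp hp]

lemma sum_antidiagonal_cb_mul_cb (N : ℕ) : ∑ p ∈ antidiagonal N, cb p.1 * cb p.2 = 1 := by
  induction N with
  | zero => simp [cb_zero]
  | succ N ih =>
    have key : ((N : ℝ) + 1) * ∑ p ∈ antidiagonal (N + 1), cb p.1 * cb p.2 = N + 1 :=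
      calc ((N : ℝ) + 1) * ∑ p ∈ antidiagonal (N + 1), cb p.1 * cb p.2
          = ∑ p ∈ antidiagonal N, (2 * p.1 + 2) * cb (p.1 + 1) * cb p.2 := by
            rw [← Nat.cast_add_one, ← two_mul_sum_antidiagonal_fst_mul,
              Finset.Nat.sum_antidiagonal_succ]
            simp only [Nat.cast_zero, zero_mul, zero_add, Nat.cast_add_one, Finset.mul_sum]
            exact Finset.sum_congr rfl fun p _ => by ring
        _ = ∑ p ∈ antidiagonal N, (2 * p.1 + 1) * cb p.1 * cb p.2 := by
            simp only [cb_succ]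
        _ = N + 1 := by
            simp only [add_mul, Finset.sum_add_distrib, one_mul, ih, mul_assoc,
              ← Finset.mul_sum, two_mul_sum_antidiagonal_fst_mul, mul_one]
    have hN : (N : ℝ) + 1 ≠ 0 := by positivity
    exact mul_left_cancel₀ hN (key.trans (mul_one _).symm)

lemma summable_cb_mul_pow {y : ℝ} (h0 : 0 ≤ y) (h1 : y < 1) : Summable fun k => ‖cb k * y ^ k‖ := by
  refine (summable_geometric_of_lt_one h0 h1).of_nonneg_of_le (fun k => norm_nonneg _) fun k => ?_
  rw [Real.norm_of_nonneg (mul_nonneg (cb_pos k).le (pow_nonneg h0 k))]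
  exact mul_le_of_le_one_left (pow_nonneg h0 k) (cb_le_one k)

lemma tsum_cb_mul_pow {y : ℝ} (h0 : 0 ≤ y) (h1 : y < 1) :
    ∑' k, cb k * y ^ k = 1 / √(1 - y) := by
  have hs := summable_cb_mul_pow h0 h1
  have hsq : (∑' k, cb k * y ^ k) ^ 2 = (1 - y)⁻¹ := by
    rw [sq, tsum_mul_tsum_eq_tsum_sum_antidiagonal_of_summable_norm hs hs]
    have hN (N : ℕ) : ∑ p ∈ antidiagonal N, cb p.1 * y ^ p.1 * (cb p.2 * y ^ p.2) = y ^ N := by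
      rw [← mul_one (y ^ N), ← sum_antidiagonal_cb_mul_cb N, Finset.mul_sum]
      refine Finset.sum_congr rfl fun p hp => ?_
      rw [← mem_antidiagonal.mp hp, pow_add]
      ring
    simp_rw [hN]
    exact tsum_geometric_of_lt_one h0 h1
  have hpos : 0 ≤ ∑' k, cb k * y ^ k :=
    tsum_nonneg fun k => mul_nonneg (cb_pos k).le (pow_nonneg h0 k)
  rw [← Real.sqrt_sq hpos, hsq, Real.sqrt_inv, one_div]

lemma image_exp_neg_Ioi : (fun u : ℝ => exp (-u)) '' Ioi 0 = Ioo 0 1 := by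
  ext t
  constructor
  · rintro ⟨u, hu, rfl⟩
    exact ⟨exp_pos _, exp_lt_one_iff.mpr (neg_lt_zero.mpr hu)⟩
  · rintro ⟨h0, h1⟩
    exact ⟨-log t, neg_pos.mpr (log_neg h0 h1), by simp [exp_log h0]⟩

lemma integral_Ioo_pow_mul_neg_log_pow (m n : ℕ) :
    ∫ t in Ioo (0 : ℝ) 1, t ^ m * (-log t) ^ n = n ! / ((m : ℝ) + 1) ^ (n + 1) := by
  rw [← image_exp_neg_Ioi, integral_image_eq_integral_abs_deriv_smul measurableSet_Ioi
    (fun u _ => (hasDerivAt_neg u).exp.hasDerivWithinAt)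
    fun _ _ _ _ h => neg_injective (exp_injective h)]
  have hGamma :
      ∫ u in Ioi (0 : ℝ), u ^ n * exp (-((m + 1) * u)) = n ! / ((m : ℝ) + 1) ^ (n + 1) := by
    have h := integral_rpow_mul_exp_neg_mul_Ioi (a := n + 1) (by positivity)
      (by positivity : (0 : ℝ) < m + 1)
    rw [add_sub_cancel_right, Gamma_nat_eq_factorial, show (n : ℝ) + 1 = (n + 1 : ℕ) by norm_cast,
      rpow_natCast, div_pow, one_pow, one_div_mul_eq_div] at h
    simpa only [rpow_natCast] using h
  rw [← hGamma]
  refine setIntegral_congr_fun measurableSet_Ioi fun u _ => ?_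
  rw [log_exp, neg_neg, smul_eq_mul, abs_mul, abs_neg, abs_one, mul_one, abs_of_pos (exp_pos _),
    ← exp_nat_mul, ← mul_assoc, ← exp_add]
  ring_nf

lemma image_sin_Ioo : sin '' Ioo 0 (π / 2) = Ioo 0 1 := by
  ext t
  constructor
  · rintro ⟨x, hx, rfl⟩
    refine ⟨sin_pos_of_pos_of_lt_pi hx.1 (by linarith [hx.2, pi_pos]), ?_⟩
    rw [← sin_pi_div_two]
    exact strictMonoOn_sin ⟨by linarith [hx.1, pi_pos], hx.2.le⟩
      ⟨by linarith [pi_pos], le_rfl⟩ hx.2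
  · rintro ⟨h0, h1⟩
    exact ⟨arcsin t, ⟨arcsin_pos.2 h0, arcsin_lt_pi_div_two.2 h1⟩, sin_arcsin (by linarith) h1.le⟩

lemma integral_Ioo_comp_sin (g : ℝ → ℝ) :
    ∫ x in Ioo 0 (π / 2), g (sin x) = ∫ t in Ioo 0 1, g t / √(1 - t ^ 2) := by
  rw [← image_sin_Ioo, integral_image_eq_integral_abs_deriv_smul measurableSet_Ioo
    (fun x _ => (hasDerivAt_sin x).hasDerivWithinAt)
    (injOn_sin.mono (Ioo_subset_Icc_self.trans (Icc_subset_Icc (by linarith [pi_pos]) le_rfl)))]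
  refine setIntegral_congr_fun measurableSet_Ioo fun x hx => ?_
  have hcos : 0 < cos x := cos_pos_of_mem_Ioo ⟨by linarith [hx.1, pi_pos], hx.2⟩
  rw [← cos_sq', sqrt_sq hcos.le, abs_of_pos hcos, smul_eq_mul]
  field_simp

lemma integral_Ioo_neg_log_pow_div_sqrt (n : ℕ) :
    ∫ t in Ioo (0 : ℝ) 1, (-log t) ^ n / √(1 - t ^ 2)
      = n ! * ∑' k, cb k / (2 * k + 1) ^ (n + 1) := by
  set F : ℕ → ℝ → ℝ := fun k t => cb k * (t ^ (2 * k) * (-log t) ^ n)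
  have hF (k : ℕ) : ∫ t in Ioo (0 : ℝ) 1, F k t = n ! * (cb k / (2 * k + 1) ^ (n + 1)) := by
    simp only [F, integral_const_mul, integral_Ioo_pow_mul_neg_log_pow]
    push_cast
    ring
  have hF_nonneg (k : ℕ) : ∀ t ∈ Ioo (0 : ℝ) 1, 0 ≤ F k t := fun t ht =>
    mul_nonneg (cb_pos k).le <|
      mul_nonneg (pow_nonneg ht.1.le _) (pow_nonneg (neg_nonneg.mpr (log_nonpos ht.1.le ht.2.le)) _)
  -- a non-integrable function would have Bochner integral `0`
  have hF_int (k : ℕ) : IntegrableOn (F k) (Ioo 0 1) :=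
    Integrable.of_integral_ne_zero <| by
      rw [hF k]
      have := cb_pos k
      positivity
  have hF_norm (k : ℕ) : ∫ t in Ioo (0 : ℝ) 1, ‖F k t‖ = n ! * (cb k / (2 * k + 1) ^ (n + 1)) := by
    rw [← hF k]
    exact setIntegral_congr_fun measurableSet_Ioo fun t ht => norm_of_nonneg (hF_nonneg k t ht)
  have hseries : ∀ t ∈ Ioo (0 : ℝ) 1, (-log t) ^ n / √(1 - t ^ 2) = ∑' k, F k t := fun t ht => by
    have ht2 : t ^ 2 < 1 := by nlinarith [ht.1, ht.2]
    simp only [F, pow_mul, ← mul_assoc, tsum_mul_right, tsum_cb_mul_pow (sq_nonneg t) ht2]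
    ring
  rw [setIntegral_congr_fun measurableSet_Ioo hseries, ← integral_tsum_of_summable_integral_norm
    hF_int (by simpa only [hF_norm] using (summable_cb_div_pow n).mul_left _)]
  simp only [hF, tsum_mul_left]

theorem stmt_10_general (n : ℕ) :
    ∑' k : ℕ, (1/(2*((k:ℝ)+1)+1)^(n+1)) * cb (k+1)
      = ((-1:ℝ)^n / (Nat.factorial n))
          * (∫ x in (0:ℝ)..(Real.pi/2), (Real.log (Real.sin x))^n) - 1 := by
  have hIoo : ∫ x in (0 : ℝ)..π / 2, log (sin x) ^ n
      = (-1) ^ n * ∫ x in Ioo 0 (π / 2), (-log (sin x)) ^ n := by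
    rw [intervalIntegral.integral_of_le (by positivity), integral_Ioc_eq_integral_Ioo,
      ← integral_const_mul]
    refine integral_congr_ae (ae_of_all _ fun x => ?_)
    simp only [← mul_pow, neg_one_mul, neg_neg]
  have hsum := (summable_cb_div_pow n).tsum_eq_zero_add
  rw [cb_zero, Nat.cast_zero, mul_zero, zero_add, one_pow, div_one] at hsum
  rw [hIoo, integral_Ioo_comp_sin (fun t => (-log t) ^ n), integral_Ioo_neg_log_pow_div_sqrt, hsum]
  have hsign : ((-1 : ℝ) ^ n) ^ 2 = 1 := by rw [← pow_mul, mul_comm, pow_mul, neg_one_sq, one_pow]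
  field_simp
  rw [hsign]
  push_cast
  ring

theorem stmt_10 (n : ℕ) (hn : 1 ≤ n) :
    ∑' k : ℕ, (1/(2*((k:ℝ)+1)+1)^(n+1)) * cb (k+1)
      = ((-1:ℝ)^n / (Nat.factorial n))
          * (∫ x in (0:ℝ)..(Real.pi/2), (Real.log (Real.sin x))^n) - 1 :=
  stmt_10_general n
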